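/- Let H be a real Hilbert space, F ⊂ H compact, and (f_n)_{n≥1} a greedy sequence for F with associated quantities σ_n and Kolmogorov widths d_n. Then for every I ∈ ℕ, σ_I ≤ (2^{I+1}/√3) · d_I. -/

import Mathlib

open Metric Set

/-- `σ_n := sup_{x ∈ F} dist(x, span{f 1, …, f n})`. -/
noncomputable def greedySigma {H : Type*} [NormedAddCommGroup H] [InnerProductSpace ℝ H]
    (F : Set H) (f : ℕ → H) (n : ℕ) : ℝ :=
  ⨆ x ∈ F, Metric.infDist x (Submodule.span ℝ (f '' Set.Icc 1 n) : Set H)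

/-- A greedy sequence for `F`: `f (n+1) ∈ F` maximizes the distance to the span of the
previously selected elements over `F`. -/
def IsGreedy {H : Type*} [NormedAddCommGroup H] [InnerProductSpace ℝ H]
    (F : Set H) (f : ℕ → H) : Prop :=
  ∀ n : ℕ, f (n + 1) ∈ F ∧ ∀ x ∈ F,
    Metric.infDist x (Submodule.span ℝ (f '' Set.Icc 1 n) : Set H) ≤
      Metric.infDist (f (n + 1)) (Submodule.span ℝ (f '' Set.Icc 1 n) : Set H)

/-- Kolmogorov `I`-width of `F`: the infimum over all subspaces `V` of dimension at most `I`
of `sup_{x ∈ F} dist(x, V)`. -/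
noncomputable def kolWidth {H : Type*} [NormedAddCommGroup H] [InnerProductSpace ℝ H]
    (F : Set H) (I : ℕ) : ℝ :=
  ⨅ V : {V : Submodule ℝ H // FiniteDimensional ℝ V ∧ Module.finrank ℝ V ≤ I},
    ⨆ x ∈ F, Metric.infDist x ((V : Submodule ℝ H) : Set H)

/-!
Let `K_n = span {f_1, …, f_n}`, `σ_n = dist (f_{n+1}, K_n)` and let `e_n` be the normalised
residual of `f_{n+1}` against `K_n`. The `e_n` are orthogonal, `⟪f_{i+1}, e_i⟫ = σ_i`,
`⟪f_{i+1}, e_j⟫ = 0` for `i < j`, and greediness gives `|⟪f_{i+1}, e_j⟫| ≤ σ_j`. If `dim V ≤ n`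
and `dist (x, V) ≤ d` on `F`, a dimension count gives `w = ∑_{j ≤ n} β_j e_j ⟂ V` with
`∑ β_j² = 1`, so `|⟪f_{i+1}, w⟫| ≤ d`. This triangular system forces `σ_j |β_j| ≤ 2^j d`, whence
`σ_n² = ∑ σ_n² β_j² ≤ ∑ σ_j² β_j² ≤ ∑_{j ≤ n} 4^j d² < 4^{n+1} d² / 3`.
-/

open Finset Module
open scoped RealInnerProductSpace

section Triangular

variable {n : ℕ} {d : ℝ}

theorem le_two_pow_mul_of_le_add_sum {t : ℕ → ℝ} (h : ∀ i ≤ n, t i ≤ d + ∑ j ∈ range i, t j) :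
    ∀ i ≤ n, t i ≤ 2 ^ i * d := by
  intro i
  induction i using Nat.strong_induction_on with
  | _ i ih =>
    intro hi
    calc t i ≤ d + ∑ j ∈ range i, t j := h i hi
      _ ≤ d + ∑ j ∈ range i, 2 ^ j * d := by
        gcongr with j hj
        exact ih j (Finset.mem_range.mp hj) (by grind)
      _ = 2 ^ i * d := by
        rw [← sum_mul, geom_sum_eq (by norm_num : (2 : ℝ) ≠ 1)]
        ring

variable {σ β : ℕ → ℝ} {a : ℕ → ℕ → ℝ}

theorem mul_abs_le_add_sum_of_triangular (hσ : ∀ j, 0 ≤ σ j) (ha_diag : ∀ i, a i i = σ i)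
    (ha_upper : ∀ i j, i < j → a i j = 0) (ha_lower : ∀ i j, j < i → |a i j| ≤ σ j)
    (hrow : ∀ i ≤ n, |∑ j ∈ range (n + 1), β j * a i j| ≤ d) {i : ℕ} (hi : i ≤ n) :
    σ i * |β i| ≤ d + ∑ j ∈ range i, σ j * |β j| := by
  have hrow_split : ∑ j ∈ range (n + 1), β j * a i j = ∑ j ∈ range i, β j * a i j + β i * σ i := by
    rw [← ha_diag, ← sum_range_succ]
    refine (sum_subset (range_subset_range.mpr (by omega)) fun j hj hji => ?_).symm
    rw [ha_upper i j (by grind), mul_zero]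
  calc σ i * |β i| = |∑ j ∈ range (n + 1), β j * a i j - ∑ j ∈ range i, β j * a i j| := by
        rw [hrow_split, add_sub_cancel_left, abs_mul, abs_of_nonneg (hσ i), mul_comm]
    _ ≤ d + ∑ j ∈ range i, σ j * |β j| := by
        refine (abs_sub _ _).trans (add_le_add (hrow i hi) ?_)
        refine (abs_sum_le_sum_abs _ _).trans (sum_le_sum fun j hj => ?_)
        rw [abs_mul, mul_comm]
        exact mul_le_mul_of_nonneg_right (ha_lower i j (Finset.mem_range.mp hj)) (abs_nonneg _)

theorem le_two_pow_div_sqrt_three_mul_of_triangular (hσ : ∀ j, 0 ≤ σ j)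
    (hσ_anti : ∀ j ≤ n, σ n ≤ σ j) (ha_diag : ∀ i, a i i = σ i)
    (ha_upper : ∀ i j, i < j → a i j = 0) (ha_lower : ∀ i j, j < i → |a i j| ≤ σ j)
    (hβ : ∑ j ∈ range (n + 1), β j ^ 2 = 1)
    (hrow : ∀ i ≤ n, |∑ j ∈ range (n + 1), β j * a i j| ≤ d) :
    σ n ≤ 2 ^ (n + 1) / √3 * d := by
  have hd : 0 ≤ d := (abs_nonneg _).trans (hrow 0 n.zero_le)
  have ht : ∀ j ≤ n, σ j * |β j| ≤ 2 ^ j * d := le_two_pow_mul_of_le_add_sum fun i hi =>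
    mul_abs_le_add_sum_of_triangular hσ ha_diag ha_upper ha_lower hrow hi
  have hsq : σ n ^ 2 ≤ (2 ^ (n + 1) / √3 * d) ^ 2 :=
    calc σ n ^ 2 = ∑ j ∈ range (n + 1), σ n ^ 2 * β j ^ 2 := by rw [← mul_sum, hβ, mul_one]
      _ ≤ ∑ j ∈ range (n + 1), (2 ^ j * d) ^ 2 := by
          gcongr with j hj
          have hj : j ≤ n := Nat.lt_succ_iff.mp (Finset.mem_range.mp hj)
          calc σ n ^ 2 * β j ^ 2 ≤ (σ j * |β j|) ^ 2 := by
                rw [mul_pow, sq_abs]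
                gcongr
                exacts [hσ n, hσ_anti j hj]
            _ ≤ (2 ^ j * d) ^ 2 := pow_le_pow_left₀ (mul_nonneg (hσ j) (abs_nonneg _)) (ht j hj) 2
      _ = (4 ^ (n + 1) - 1) / 3 * d ^ 2 := by
          simp_rw [mul_pow, ← pow_mul, mul_comm _ 2, pow_mul, ← sum_mul]
          rw [geom_sum_eq (by norm_num)]
          norm_num
      _ ≤ (2 ^ (n + 1) / √3 * d) ^ 2 := by
          rw [mul_pow, div_pow, Real.sq_sqrt (by norm_num), ← pow_mul, mul_comm _ 2, pow_mul]
          norm_num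
          gcongr
          exact sub_le_self _ zero_le_one
  exact (pow_le_pow_iff_left₀ (hσ n) (by positivity) two_ne_zero).mp hsq

end Triangular

section InnerProduct

variable {𝕜 E : Type*} [RCLike 𝕜] [NormedAddCommGroup E] [InnerProductSpace 𝕜 E]

theorem Submodule.norm_sub_starProjection_eq_infDist (K : Submodule 𝕜 E)
    [K.HasOrthogonalProjection] (x : E) : ‖x - K.starProjection x‖ = infDist x K := by
  simp only [K.starProjection_minimal, infDist_eq_iInf, dist_eq_norm]
  rfl

theorem norm_inner_le_infDist_mul_norm {K : Submodule 𝕜 E} {w : E} (hw : w ∈ Kᗮ) (x : E) :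
    ‖inner 𝕜 x w‖ ≤ infDist x K * ‖w‖ := by
  rcases eq_or_ne w 0 with rfl | hw0
  · simp
  have hw_pos : 0 < ‖w‖ := norm_pos_iff.mpr hw0
  rw [← div_le_iff₀ hw_pos]
  refine (le_infDist ⟨0, K.zero_mem⟩).2 fun y hy => ?_
  rw [div_le_iff₀ hw_pos, dist_eq_norm, ← sub_zero (inner 𝕜 x w),
    ← Submodule.inner_right_of_mem_orthogonal hy hw, ← inner_sub_left]
  exact norm_inner_le_norm _ _

end InnerProduct

section RealInnerProduct

variable {E : Type*} [NormedAddCommGroup E] [InnerProductSpace ℝ E]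

theorem norm_sum_smul_sq_le_sum_sq {ι : Type*} {e : ι → E}
    (he : Pairwise fun i j => ⟪e i, e j⟫ = 0) (he_norm : ∀ i, ‖e i‖ ≤ 1) (s : Finset ι)
    (c : ι → ℝ) : ‖∑ i ∈ s, c i • e i‖ ^ 2 ≤ ∑ i ∈ s, c i ^ 2 := by
  rw [← real_inner_self_eq_norm_sq, sum_inner]
  refine sum_le_sum fun i hi => ?_
  have h_off : ∀ j ∈ s, j ≠ i → ⟪c i • e i, c j • e j⟫ = 0 := fun j _ hji => by
    rw [real_inner_smul_left, real_inner_smul_right, he hji.symm, mul_zero, mul_zero]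
  rw [inner_sum, sum_eq_single i h_off (absurd hi), real_inner_smul_left, real_inner_smul_right,
    real_inner_self_eq_norm_sq, ← mul_assoc, ← sq]
  exact mul_le_of_le_one_right (sq_nonneg _) (pow_le_one₀ (norm_nonneg _) (he_norm i))

theorem exists_sum_sq_eq_one_sum_smul_mem_orthogonal {ι : Type*} [Fintype ι] (e : ι → E)
    (V : Submodule ℝ E) [FiniteDimensional ℝ V] (hV : finrank ℝ V < Fintype.card ι) :
    ∃ c : ι → ℝ, ∑ i, c i ^ 2 = 1 ∧ ∑ i, c i • e i ∈ Vᗮ := by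
  let T : (ι → ℝ) →ₗ[ℝ] V :=
    V.orthogonalProjectionOnto.toLinearMap ∘ₗ Fintype.linearCombination ℝ e
  obtain ⟨c, hcT, hc0⟩ := Submodule.exists_mem_ne_zero_of_ne_bot
    (LinearMap.ker_ne_bot_of_finrank_lt (f := T) (by rwa [finrank_fintype_fun_eq_card]))
  have hc_pos : 0 < ∑ i, c i ^ 2 := by
    obtain ⟨i, hi⟩ := Function.ne_iff.mp hc0
    exact sum_pos' (fun j _ => sq_nonneg _) ⟨i, mem_univ _, pow_two_pos_of_ne_zero hi⟩
  refine ⟨fun i => (√(∑ i, c i ^ 2))⁻¹ * c i, ?_, ?_⟩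
  · simp_rw [mul_pow, ← mul_sum, inv_pow, Real.sq_sqrt hc_pos.le]
    exact inv_mul_cancel₀ hc_pos.ne'
  · simp_rw [mul_smul, ← smul_sum]
    exact Submodule.smul_mem _ _ (V.orthogonalProjectionOnto_eq_zero_iff.mp hcT)

theorem exists_sum_range_sq_eq_one_sum_smul_mem_orthogonal (e : ℕ → E) {n : ℕ}
    (V : Submodule ℝ E) [FiniteDimensional ℝ V] (hV : finrank ℝ V ≤ n) :
    ∃ β : ℕ → ℝ, ∑ j ∈ range (n + 1), β j ^ 2 = 1 ∧ ∑ j ∈ range (n + 1), β j • e j ∈ Vᗮ := by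
  obtain ⟨c, hc, hcV⟩ := exists_sum_sq_eq_one_sum_smul_mem_orthogonal
    (fun j : Fin (n + 1) => e j) V (by simpa using Nat.lt_succ_of_le hV)
  refine ⟨fun j => c (Fin.ofNat (n + 1) j), ?_, ?_⟩ <;>
    simpa [← Fin.sum_univ_eq_sum_range, Fin.cast_val_eq_self]

end RealInnerProduct

section Greedy

variable {H : Type*} [NormedAddCommGroup H] [InnerProductSpace ℝ H]

def greedySpan (f : ℕ → H) (n : ℕ) : Submodule ℝ H :=
  Submodule.span ℝ (f '' Set.Icc 1 n)

instance (f : ℕ → H) (n : ℕ) : FiniteDimensional ℝ (greedySpan f n) :=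
  FiniteDimensional.span_of_finite ℝ ((Set.finite_Icc 1 n).image f)

noncomputable def greedyError (f : ℕ → H) (n : ℕ) : ℝ :=
  infDist (f (n + 1)) (greedySpan f n)

/-- Zero, not a unit vector, when `f (n + 1) ∈ greedySpan f n`, since `‖0‖⁻¹ = 0`. -/
noncomputable def greedyDirection (f : ℕ → H) (n : ℕ) : H :=
  let r := f (n + 1) - (greedySpan f n).starProjection (f (n + 1))
  ‖r‖⁻¹ • r

variable {f : ℕ → H}

theorem greedySpan_zero : greedySpan f 0 = ⊥ := by
  simp [greedySpan]

theorem greedySpan_mono : Monotone (greedySpan f) := fun _ _ hmn =>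
  Submodule.span_mono (image_mono (Icc_subset_Icc_right hmn))

theorem apply_succ_mem_greedySpan {i n : ℕ} (hin : i < n) : f (i + 1) ∈ greedySpan f n :=
  Submodule.subset_span ⟨i + 1, ⟨by omega, hin⟩, rfl⟩

theorem greedyDirection_mem_orthogonal (n : ℕ) : greedyDirection f n ∈ (greedySpan f n)ᗮ :=
  Submodule.smul_mem _ _ (Submodule.sub_starProjection_mem_orthogonal _)

theorem greedyDirection_mem_greedySpan {j n : ℕ} (hjn : j < n) :
    greedyDirection f j ∈ greedySpan f n :=
  Submodule.smul_mem _ _ <| Submodule.sub_mem _ (apply_succ_mem_greedySpan hjn)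
    (greedySpan_mono hjn.le (Submodule.starProjection_apply_mem _ _))

theorem norm_greedyDirection_le_one (n : ℕ) : ‖greedyDirection f n‖ ≤ 1 := by
  rw [greedyDirection, norm_smul, norm_inv, norm_norm]
  exact inv_mul_le_one

theorem inner_greedyDirection_eq_zero : Pairwise fun i j =>
    ⟪greedyDirection f i, greedyDirection f j⟫ = 0 := by
  intro i j hij
  rcases hij.lt_or_gt with hij | hji
  · exact Submodule.inner_right_of_mem_orthogonal (greedyDirection_mem_greedySpan hij)
      (greedyDirection_mem_orthogonal j)
  · exact Submodule.inner_left_of_mem_orthogonal (greedyDirection_mem_greedySpan hji)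
      (greedyDirection_mem_orthogonal i)

theorem inner_apply_succ_greedyDirection_self (n : ℕ) :
    ⟪f (n + 1), greedyDirection f n⟫ = greedyError f n := by
  set K := greedySpan f n
  set r := f (n + 1) - K.starProjection (f (n + 1))
  have hr : ⟪f (n + 1), r⟫ = ‖r‖ ^ 2 := by
    rw [← real_inner_self_eq_norm_sq, inner_sub_left _ (K.starProjection _),
      Submodule.inner_right_of_mem_orthogonal (K.starProjection_apply_mem _)
        (K.sub_starProjection_mem_orthogonal _), sub_zero]
  rw [greedyDirection, real_inner_smul_right, hr, sq, ← mul_assoc, inv_mul_mul_self,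
    greedyError, K.norm_sub_starProjection_eq_infDist]

theorem inner_apply_succ_greedyDirection_of_lt {i j : ℕ} (hij : i < j) :
    ⟪f (i + 1), greedyDirection f j⟫ = 0 :=
  Submodule.inner_right_of_mem_orthogonal (apply_succ_mem_greedySpan hij)
    (greedyDirection_mem_orthogonal j)

theorem abs_inner_greedyDirection_le (x : H) (n : ℕ) :
    |⟪x, greedyDirection f n⟫| ≤ infDist x (greedySpan f n) := by
  rw [← Real.norm_eq_abs]
  exact (norm_inner_le_infDist_mul_norm (greedyDirection_mem_orthogonal n) x).trans
    (mul_le_of_le_one_right infDist_nonneg (norm_greedyDirection_le_one n))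

end Greedy

namespace IsGreedy

variable {H : Type*} [NormedAddCommGroup H] [InnerProductSpace ℝ H] {F : Set H} {f : ℕ → H}

theorem infDist_le_greedyError (hf : IsGreedy F f) {x : H} (hx : x ∈ F) (n : ℕ) :
    infDist x (greedySpan f n) ≤ greedyError f n :=
  (hf n).2 x hx

theorem greedyError_antitone (hf : IsGreedy F f) : Antitone (greedyError f) :=
  antitone_nat_of_succ_le fun n =>
    (infDist_le_infDist_of_subset (greedySpan_mono n.le_succ) ⟨0, zero_mem _⟩).trans
      (hf.infDist_le_greedyError (hf (n + 1)).1 n)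

theorem infDist_le_greedyError_zero (hf : IsGreedy F f) (V : Submodule ℝ H) {x : H}
    (hx : x ∈ F) : infDist x V ≤ greedyError f 0 := by
  refine (infDist_le_infDist_of_subset ?_ ⟨0, zero_mem _⟩).trans (hf.infDist_le_greedyError hx 0)
  simp [greedySpan_zero]

theorem infDist_le_iSup (hf : IsGreedy F f) (V : Submodule ℝ H) {x : H} (hx : x ∈ F) :
    infDist x V ≤ ⨆ y ∈ F, infDist y V := by
  refine le_ciSup₂ (f := fun y (_ : y ∈ F) => infDist y V) ⟨greedyError f 0, ?_⟩ x hx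
  simp only [mem_upperBounds, mem_iUnion, Set.mem_range]
  rintro _ ⟨y, hy, rfl⟩
  exact hf.infDist_le_greedyError_zero V hy

theorem greedyError_le (hf : IsGreedy F f) {n : ℕ} (V : Submodule ℝ H) [FiniteDimensional ℝ V]
    (hV : finrank ℝ V ≤ n) {d : ℝ} (hd : ∀ x ∈ F, infDist x V ≤ d) :
    greedyError f n ≤ 2 ^ (n + 1) / √3 * d := by
  obtain ⟨β, hβ, hwV⟩ :=
    exists_sum_range_sq_eq_one_sum_smul_mem_orthogonal (greedyDirection f) V hV
  set w := ∑ j ∈ range (n + 1), β j • greedyDirection f j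
  have hw : ‖w‖ ≤ 1 := by
    have := norm_sum_smul_sq_le_sum_sq (inner_greedyDirection_eq_zero (f := f))
      norm_greedyDirection_le_one (range (n + 1)) β
    rw [hβ] at this
    exact (sq_le_one_iff₀ (norm_nonneg _)).mp this
  refine le_two_pow_div_sqrt_three_mul_of_triangular (fun _ => infDist_nonneg)
    (fun j hj => hf.greedyError_antitone hj) inner_apply_succ_greedyDirection_self
    (fun _ _ => inner_apply_succ_greedyDirection_of_lt)
    (fun i j _ => (abs_inner_greedyDirection_le _ j).trans (hf.infDist_le_greedyError (hf i).1 j))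
    hβ fun i _ => ?_
  have hrow : ∑ j ∈ range (n + 1), β j * ⟪f (i + 1), greedyDirection f j⟫ = ⟪f (i + 1), w⟫ := by
    simp only [w, inner_sum, real_inner_smul_right]
  rw [hrow, ← Real.norm_eq_abs]
  exact (norm_inner_le_infDist_mul_norm hwV _).trans
    ((mul_le_of_le_one_right infDist_nonneg hw).trans (hd _ (hf i).1))

end IsGreedy

theorem greedy_sigma_le_two_pow_width_general
    {H : Type*} [NormedAddCommGroup H] [InnerProductSpace ℝ H]
    (F : Set H) (f : ℕ → H) (hf : IsGreedy F f) :
    ∀ I : ℕ, greedySigma F f I ≤ ((2 : ℝ) ^ (I + 1) / Real.sqrt 3) * kolWidth F I := by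
  intro I
  have hC : 0 < (2 : ℝ) ^ (I + 1) / √3 := by positivity
  have hσ : greedySigma F f I ≤ greedyError f I :=
    Real.iSup_le (fun x => Real.iSup_le (hf.infDist_le_greedyError · I) infDist_nonneg)
      infDist_nonneg
  have : Nonempty {V : Submodule ℝ H // FiniteDimensional ℝ V ∧ finrank ℝ V ≤ I} :=
    ⟨⟨⊥, inferInstance, by simp⟩⟩
  refine hσ.trans ((div_le_iff₀' hC).mp (le_ciInf fun V => ?_))
  have := V.2.1
  rw [div_le_iff₀' hC]
  exact hf.greedyError_le V V.2.2 fun x hx => hf.infDist_le_iSup V hx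

/-- Direct comparison of the greedy quantities with the Kolmogorov widths:
`σ_I ≤ (2^{I+1}/√3) d_I`. -/
theorem greedy_sigma_le_two_pow_width
    {H : Type*} [NormedAddCommGroup H] [InnerProductSpace ℝ H]
    (F : Set H) (hF : IsCompact F) (f : ℕ → H) (hf : IsGreedy F f) :
    ∀ I : ℕ, greedySigma F f I ≤ ((2 : ℝ) ^ (I + 1) / Real.sqrt 3) * kolWidth F I :=
  greedy_sigma_le_two_pow_width_general F f hf
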